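/- arXiv:1210.6568 — 4 statements merged into one kernel-verified Lean document; each statement's English description precedes it below -/
import Mathlib

section
/- Let G be a connected graph with at least 2 vertices and chromatic number χ(G) ≤ m+1, where m ≥ 1, and let l ≥ 1. Then χ_=(G ∘^l K_m) ≤ Δ(G ∘^l K_m); that is, the Equitable Coloring Conjecture holds for the graph G ∘^l K_m. -/
open SimpleGraph Finset

/-- The corona `G ∘ H` of two graphs: one copy of `G` and `|V(G)|` copies of `H`,
the `i`-th vertex of `G` being joined to every vertex of the `i`-th copy of `H`. -/
def SimpleGraph.corona {α β : Type*} (G : SimpleGraph α) (H : SimpleGraph β) :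
    SimpleGraph (α ⊕ α × β) where
  Adj x y :=
    match x, y with
    | Sum.inl u, Sum.inl v => G.Adj u v
    | Sum.inl u, Sum.inr (v, _) => u = v
    | Sum.inr (u, _), Sum.inl v => u = v
    | Sum.inr (u, a), Sum.inr (v, b) => u = v ∧ H.Adj a b
  symm := by
    constructor
    rintro (u | ⟨u, a⟩) (v | ⟨v, b⟩) h
    · exact h.symm
    · exact h.symm
    · exact h.symm
    · exact ⟨h.1.symm, h.2.symm⟩
  loopless := by
    constructor
    rintro (u | ⟨u, a⟩) h
    · exact G.loopless.irrefl u h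
    · exact H.loopless.irrefl a h.2

universe u

/-- Vertex type of the `l`-fold corona `G ∘^l H` (with `l = 0` giving `G` itself). -/
def coronaType (α β : Type u) : ℕ → Type u
  | 0 => α
  | l + 1 => coronaType α β l ⊕ coronaType α β l × β

instance coronaType.fintype (α β : Type u) [Fintype α] [Fintype β] :
    ∀ l, Fintype (coronaType α β l)
  | 0 => inferInstanceAs (Fintype α)
  | l + 1 =>
    letI := coronaType.fintype α β l
    inferInstanceAs (Fintype (coronaType α β l ⊕ coronaType α β l × β))

/-- The `l`-fold corona `G ∘^l H`, defined by `G ∘^0 H = G` and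
`G ∘^(l+1) H = (G ∘^l H) ∘ H`. -/
def coronaPow {α β : Type u} (G : SimpleGraph α) (H : SimpleGraph β) :
    ∀ l, SimpleGraph (coronaType α β l)
  | 0 => G
  | l + 1 => (coronaPow G H l).corona H

/-- The canonical copy of a vertex of `G` inside `G ∘^l H`. -/
def coronaBase {α : Type u} (β : Type u) : ∀ l, α → coronaType α β l
  | 0 => id
  | l + 1 => fun a => Sum.inl (coronaBase β l a)

/-- `c` is an equitable `k`-coloring of `G`: it is proper and any two color classes
differ in size by at most one. -/
def SimpleGraph.IsEquitableColoring {V : Type*} [Fintype V] (G : SimpleGraph V) {k : ℕ}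
    (c : V → Fin k) : Prop :=
  (∀ ⦃u v⦄, G.Adj u v → c u ≠ c v) ∧
    ∀ i j : Fin k,
      (Finset.univ.filter fun v => c v = i).card ≤
        (Finset.univ.filter fun v => c v = j).card + 1

/-- `G` is equitably `k`-colorable. -/
def SimpleGraph.EquitablyColorable {V : Type*} [Fintype V] (G : SimpleGraph V) (k : ℕ) : Prop :=
  ∃ c : V → Fin k, G.IsEquitableColoring c

/-- The equitable chromatic number: the least `k` such that `G` is equitably `k`-colorable. -/
noncomputable def SimpleGraph.equitableChromaticNumber {V : Type*} [Fintype V]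
    (G : SimpleGraph V) : ℕ :=
  sInf {k | G.EquitablyColorable k}

/-- The maximum degree of a finite graph (no decidability assumptions). -/
noncomputable def SimpleGraph.maxDeg {V : Type*} [Fintype V] (G : SimpleGraph V) : ℕ :=
  Finset.univ.sup fun v => (G.neighborSet v).ncard

/-!
Color `G ∘^(l-1) K_m` properly with `m + 1` colors (possible since `χ(G) ≤ m + 1` and each
corona step preserves this), and extend to the last corona step by giving the copy of `K_m` at a
vertex colored `p` the `m` colors other than `p`. Then every color occurs exactly once on each
closed "petal" `{v} ∪ K_m`, so all color classes have the same size and `χ_= ≤ m + 1`. On the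
other hand a vertex of `G` has a neighbor in `G` (connected, at least two vertices) together with
its `m` pendant clique vertices, so `Δ ≥ m + 1`.
-/

theorem Fin.card_filter_succAbove_eq {m : ℕ} (p i : Fin (m + 1)) :
    #{a | p.succAbove a = i} = if p = i then 0 else 1 := by
  split_ifs with h
  · subst h
    simp [Fin.succAbove_ne]
  · obtain ⟨a, rfl⟩ := Fin.exists_succAbove_eq (Ne.symm h)
    rw [Finset.card_eq_one]
    exact ⟨a, by ext; simp⟩

namespace SimpleGraph

theorem ncard_neighborSet_le_maxDeg {V : Type*} [Fintype V] (G : SimpleGraph V) (v : V) :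
    (G.neighborSet v).ncard ≤ G.maxDeg :=
  Finset.le_sup (f := fun v => (G.neighborSet v).ncard) (Finset.mem_univ v)

section Corona

variable {V β : Type*} (F : SimpleGraph V) (H : SimpleGraph β)

theorem corona_neighborSet_inl (v : V) :
    (F.corona H).neighborSet (Sum.inl v) =
      Sum.inl '' F.neighborSet v ∪ Set.range fun b => Sum.inr (v, b) := by
  ext (w | ⟨w, b⟩)
  · simp [corona]
  · simp [corona, eq_comm]

theorem ncard_neighborSet_corona_inl [Finite V] [Fintype β] (v : V) :
    ((F.corona H).neighborSet (Sum.inl v)).ncard =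
      (F.neighborSet v).ncard + Fintype.card β := by
  rw [corona_neighborSet_inl, Set.ncard_union_eq, Set.ncard_image_of_injective _ Sum.inl_injective,
    Set.ncard_range_of_injective, Nat.card_eq_fintype_card]
  · intro a b hab
    simpa using hab
  · rw [Set.disjoint_left]
    rintro _ ⟨w, -, rfl⟩ ⟨b, hb⟩
    exact Sum.inr_ne_inl hb

variable {F} {m : ℕ}

def Coloring.corona (c : F.Coloring (Fin (m + 1))) (H : SimpleGraph (Fin m)) :
    (F.corona H).Coloring (Fin (m + 1)) :=
  Coloring.mk (Sum.elim c fun p => (c p.1).succAbove p.2) <| by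
    rintro (u | ⟨u, a⟩) (v | ⟨v, b⟩) h
    · exact c.valid h
    · obtain rfl : u = v := h
      exact (Fin.succAbove_ne (c u) b).symm
    · obtain rfl : u = v := h
      exact Fin.succAbove_ne (c u) a
    · obtain ⟨rfl, hab⟩ := h
      exact fun he => hab.ne (Fin.succAbove_right_injective he)

@[simp]
theorem Coloring.corona_inl (c : F.Coloring (Fin (m + 1))) (H : SimpleGraph (Fin m)) (v : V) :
    c.corona H (Sum.inl v) = c v :=
  rfl

@[simp]
theorem Coloring.corona_inr (c : F.Coloring (Fin (m + 1))) (H : SimpleGraph (Fin m)) (v : V)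
    (a : Fin m) : c.corona H (Sum.inr (v, a)) = (c v).succAbove a :=
  rfl

/-- Every vertex `v` of `F` contributes exactly one vertex of color `i`: either `v` itself or
the unique vertex of its copy of `K_m` colored `i`. -/
theorem Coloring.card_filter_corona_eq [Fintype V] (c : F.Coloring (Fin (m + 1)))
    (H : SimpleGraph (Fin m)) (i : Fin (m + 1)) :
    #{x | c.corona H x = i} = Fintype.card V := by
  classical
  have hfibre (v : V) :
      ((if c v = i then 1 else 0) + ∑ a, if (c v).succAbove a = i then 1 else 0) = 1 := by
    rw [← Finset.card_filter, Fin.card_filter_succAbove_eq]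
    split_ifs <;> rfl
  rw [Finset.card_filter, Fintype.sum_sum_type, Fintype.sum_prod_type, ← Finset.sum_add_distrib]
  exact (Finset.sum_congr rfl fun v _ => hfibre v).trans (by simp)

theorem Colorable.corona (hF : F.Colorable (m + 1)) (H : SimpleGraph (Fin m)) :
    (F.corona H).Colorable (m + 1) :=
  let ⟨c⟩ := hF
  ⟨c.corona H⟩

theorem Colorable.equitablyColorable_corona [Fintype V] (hF : F.Colorable (m + 1))
    (H : SimpleGraph (Fin m)) : (F.corona H).EquitablyColorable (m + 1) := by
  obtain ⟨c⟩ := hF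
  refine ⟨c.corona H, fun _ _ => (c.corona H).valid, fun i j => ?_⟩
  rw [c.card_filter_corona_eq, c.card_filter_corona_eq]
  exact Nat.le_succ _

end Corona

end SimpleGraph

theorem coronaBase_adj {α β : Type u} {G : SimpleGraph α} (H : SimpleGraph β) {v w : α}
    (h : G.Adj v w) : ∀ l, (coronaPow G H l).Adj (coronaBase β l v) (coronaBase β l w)
  | 0 => h
  | l + 1 => coronaBase_adj H h l

theorem SimpleGraph.Colorable.coronaPow {α : Type} {G : SimpleGraph α} {m : ℕ}
    (hG : G.Colorable (m + 1)) (H : SimpleGraph (Fin m)) :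
    ∀ l, (coronaPow G H l).Colorable (m + 1)
  | 0 => hG
  | l + 1 => (hG.coronaPow H l).corona H

theorem ecc_coronaPow_completeGraph_general
    {α : Type} [Fintype α] (G : SimpleGraph α) (m l : ℕ)
    (hG : G.Connected) (hcard : 2 ≤ Fintype.card α)
    (hcol : G.Colorable (m + 1)) (hl : 1 ≤ l) :
    (coronaPow G (⊤ : SimpleGraph (Fin m)) l).equitableChromaticNumber ≤
      (coronaPow G (⊤ : SimpleGraph (Fin m)) l).maxDeg := by
  obtain ⟨k, rfl⟩ : ∃ k, l = k + 1 := ⟨l - 1, by omega⟩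
  have : Nontrivial α := Fintype.one_lt_card_iff_nontrivial.mp hcard
  obtain ⟨v, -⟩ := exists_pair_ne α
  obtain ⟨w, hvw⟩ : ∃ w, G.Adj v w := G.mem_support.mp (by simp [hG.preconnected])
  set F := coronaPow G (⊤ : SimpleGraph (Fin m)) k
  have hχ : (F.corona ⊤).equitableChromaticNumber ≤ m + 1 :=
    Nat.sInf_le ((hcol.coronaPow ⊤ k).equitablyColorable_corona ⊤)
  have hdeg : 0 < (F.neighborSet (coronaBase (Fin m) k v)).ncard :=
    (Set.ncard_pos).mpr ⟨_, coronaBase_adj ⊤ hvw k⟩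
  have hΔ : m + 1 ≤ (F.corona ⊤).maxDeg :=
    calc m + 1 ≤ (F.neighborSet (coronaBase (Fin m) k v)).ncard + Fintype.card (Fin m) := by
          rw [Fintype.card_fin]
          omega
      _ = ((F.corona ⊤).neighborSet (Sum.inl (coronaBase (Fin m) k v))).ncard :=
          (ncard_neighborSet_corona_inl F ⊤ _).symm
      _ ≤ (F.corona ⊤).maxDeg := ncard_neighborSet_le_maxDeg _ _
  exact hχ.trans hΔ

/-- The Equitable Coloring Conjecture holds for `G ∘^l K_m` when `G` is
connected on at least two vertices and `χ(G) ≤ m+1`. -/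
theorem ecc_coronaPow_completeGraph
    {α : Type} [Fintype α] (G : SimpleGraph α) (m l : ℕ)
    (hG : G.Connected) (hcard : 2 ≤ Fintype.card α) (hm : 1 ≤ m)
    (hcol : G.Colorable (m + 1)) (hl : 1 ≤ l) :
    (coronaPow G (⊤ : SimpleGraph (Fin m)) l).equitableChromaticNumber ≤
      (coronaPow G (⊤ : SimpleGraph (Fin m)) l).maxDeg :=
  ecc_coronaPow_completeGraph_general G m l hG hcard hcol hl
end

section
/- Let G be a graph on n vertices admitting an equitable k-coloring with k dividing n (so all k color classes of G have size n/k), and let H be a (k−1)-partite graph. Then the corona G ∘ H admits a strongly equitable k-coloring, i.e. a proper k-coloring in which each of the k color classes has exactly n(1+|V(H)|)/k vertices. -/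
open SimpleGraph Finset

universe u

/-!
Equitability together with `k ∣ n` forces every color class of `G` to have exactly `n / k`
vertices. Keep such a coloring `c` on `G` and color the `u`-th copy of `H` by `c u + f`, where
`f` is a `(k-1)`-coloring of `H` shifted into the nonzero residues mod `k`: the shift keeps each
copy properly colored and different from its root `u`. For each vertex `b` of `H`, the vertices
`(u, b)` of color `i` are those with `c u = i - f b`, so every color occurs exactly `n / k` times
in each of the `1 + |V(H)|` layers.
-/

theorem Fintype.eq_of_le_add_one_of_sum_eq_card_mul {ι : Type*} [Fintype ι] {s : ι → ℕ}
    {m : ℕ} (hs : ∀ i j, s i ≤ s j + 1) (hsum : ∑ j, s j = Fintype.card ι * m) (i : ι) :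
    s i = m := by
  have hconst : ∑ _j : ι, m = Fintype.card ι * m := by simp
  by_contra hne
  rcases Nat.lt_or_gt_of_ne hne with hlt | hgt
  · have : ∑ j, s j < ∑ _j : ι, m :=
      Finset.sum_lt_sum (fun j _ => by have := hs j i; omega) ⟨i, mem_univ i, hlt⟩
    omega
  · have : ∑ _j : ι, m < ∑ j, s j :=
      Finset.sum_lt_sum (fun j _ => by have := hs i j; omega) ⟨i, mem_univ i, hgt⟩
    omega

theorem SimpleGraph.IsEquitableColoring.card_colorClass {V : Type*} [Fintype V]
    {G : SimpleGraph V} {k : ℕ} {c : V → Fin k} (hc : G.IsEquitableColoring c)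
    (hdvd : k ∣ Fintype.card V) (i : Fin k) :
    #{v | c v = i} = Fintype.card V / k := by
  classical
  refine Fintype.eq_of_le_add_one_of_sum_eq_card_mul hc.2 ?_ i
  rw [Fintype.card_fin, Nat.mul_div_cancel' hdvd, ← card_univ,
    card_eq_sum_card_fiberwise fun v _ => mem_univ (c v)]

section CoronaShift

variable {α β M : Type*} [AddGroup M]

def coronaShift (c : α → M) (f : β → M) : α ⊕ α × β → M :=
  Sum.elim c fun p => c p.1 + f p.2

@[simp]
theorem coronaShift_inl (c : α → M) (f : β → M) (u : α) : coronaShift c f (.inl u) = c u := rfl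

@[simp]
theorem coronaShift_inr (c : α → M) (f : β → M) (u : α) (b : β) :
    coronaShift c f (.inr (u, b)) = c u + f b := rfl

theorem coronaShift_adj_ne {G : SimpleGraph α} {H : SimpleGraph β} {c : α → M} {f : β → M}
    (hc : ∀ ⦃u v⦄, G.Adj u v → c u ≠ c v) (hf : ∀ ⦃a b⦄, H.Adj a b → f a ≠ f b)
    (hf0 : ∀ b, f b ≠ 0) :
    ∀ ⦃x y⦄, (G.corona H).Adj x y → coronaShift c f x ≠ coronaShift c f y := by
  rintro (u | ⟨u, a⟩) (v | ⟨v, b⟩) h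
  · exact hc h
  · obtain rfl : u = v := h
    simpa using hf0 b
  · obtain rfl : u = v := h
    simpa using hf0 a
  · obtain ⟨rfl, hab⟩ := h
    simpa using hf hab

theorem card_coronaShift_eq [Fintype α] [Fintype β] [DecidableEq M] {c : α → M} (f : β → M)
    {m : ℕ} (hc : ∀ i, #{u | c u = i} = m) (i : M) :
    #{x | coronaShift c f x = i} = m * (1 + Fintype.card β) := by
  have hlayer : ∀ b, (∑ u, if c u + f b = i then 1 else 0) = m := fun b => by
    simp_rw [← eq_sub_iff_add_eq, ← card_filter, hc]
  rw [card_filter, Fintype.sum_sum_type, Fintype.sum_prod_type_right]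
  change (∑ u, if c u = i then 1 else 0) + ∑ b, ∑ u, (if c u + f b = i then 1 else 0) = _
  rw [← card_filter, hc, Fintype.sum_congr _ _ hlayer]
  simp [mul_add, mul_comm]

end CoronaShift

theorem SimpleGraph.Colorable.exists_fin_succ_ne_zero {β : Type*} {H : SimpleGraph β} {k : ℕ}
    (hH : H.Colorable k) :
    ∃ f : β → Fin (k + 1), (∀ ⦃a b⦄, H.Adj a b → f a ≠ f b) ∧ ∀ b, f b ≠ 0 := by
  obtain ⟨d⟩ := hH
  exact ⟨fun b => (d b).succ, fun a b h => by simpa using d.valid h,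
    fun b => Fin.succ_ne_zero _⟩

/-- If `G` is equitably `k`-colorable on `n` vertices with `k ∣ n`, and `H`
is `(k-1)`-partite, then `G ∘ H` has a strongly equitable `k`-coloring: a proper
`k`-coloring all of whose color classes have exactly `n(1+|V(H)|)/k` vertices. -/
theorem corona_strongly_equitable
    {α β : Type} [Fintype α] [Fintype β] (G : SimpleGraph α) (H : SimpleGraph β)
    (k n : ℕ) (hn : Fintype.card α = n) (hG : G.EquitablyColorable k) (hdvd : k ∣ n)
    (hH : H.Colorable (k - 1)) :
    ∃ c : α ⊕ α × β → Fin k,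
      (∀ ⦃u v⦄, (G.corona H).Adj u v → c u ≠ c v) ∧
      ∀ i : Fin k,
        (Finset.univ.filter fun v => c v = i).card = n * (1 + Fintype.card β) / k := by
  classical
  obtain ⟨c, hc⟩ := hG
  subst hn
  cases k with
  | zero =>
    have : IsEmpty α := ⟨fun a => (c a).elim0⟩
    exact ⟨Sum.elim c fun p => c p.1, fun u => isEmptyElim u, fun i => i.elim0⟩
  | succ k =>
    obtain ⟨f, hf, hf0⟩ := hH.exists_fin_succ_ne_zero
    refine ⟨coronaShift c f, coronaShift_adj_ne hc.1 hf hf0, fun i => ?_⟩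
    rw [card_coronaShift_eq f (hc.card_colorClass hdvd), Nat.div_mul_right_comm hdvd]
end

section
/- Let G be an equitably 4-colorable graph on n ≥ 2 vertices with n not divisible by 3, and let k ≥ 3 and l ≥ 1 be integers. Then χ_=(G ∘^l C_{2k}) = 4. -/
open SimpleGraph Finset

universe u

/-!
In `H ∘ C_{2k}` every vertex `v` of `H` spans a triangle with an edge of the cycle hung at `v`, so
two colours never suffice. In a proper 3-colouring of `H ∘ C_{2k}` the cycle hung at `v`
avoids the colour of `v`; as independent sets of `C_{2k}` have at most `k` vertices, it carries
exactly `k` vertices of each of the two other colours. Hence colour `j` has `a j + (|H| - a j) k`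
vertices, where `a j` counts the vertices of `H` of colour `j`, and for `k ≥ 3` equitability forces
all `a j` to be equal: the colouring restricts to an equitable 3-colouring of `H` and `3 ∣ |H|`.
Descending to `G` contradicts `3 ∤ n`.

Conversely, an equitable 4-colouring of `H` with `|H| ≥ 2` extends to `H ∘ C_{2k}`: the cycle of a
vertex of colour `i` gets colour `i + 2` at its odd positions, and colours `i + 3` and `i + 1` at
`x v` and `k - x v` of its even positions. The class sizes only depend on the totals `X i` of `x`
over the colour classes, the sum of the sizes of classes `j` and `j + 2` not even on those, and `X`
can be chosen to split each of these two pairs evenly.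
-/

namespace SimpleGraph

lemma cycleGraph_adj_mod_two_ne {k : ℕ} {p q : Fin (2 * k)} (h : (cycleGraph (2 * k)).Adj p q) :
    p.val % 2 ≠ q.val % 2 := fun hpq =>
  (cycleGraph.bicoloring_of_even (2 * k) (even_two_mul k)).valid h
    (congrArg (fun r => decide (r = 0)) hpq)

lemma two_mul_card_le_of_isIndepSet_cycleGraph {n : ℕ} (hn : 2 ≤ n) {s : Finset (Fin n)}
    (hs : (cycleGraph n).IsIndepSet (s : Set (Fin n))) : 2 * #s ≤ n := by
  obtain ⟨n, rfl⟩ : ∃ m, n = m + 2 := ⟨n - 2, by omega⟩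
  have hdisj : Disjoint s (s.map (addRightEmbedding 1)) := by
    refine Finset.disjoint_left.mpr fun q hq hq' => ?_
    obtain ⟨p, hp, rfl⟩ := Finset.mem_map.mp hq'
    have hadj : (cycleGraph (n + 2)).Adj (p + 1) p := by simp [cycleGraph_adj]
    exact hs hq hp hadj.ne hadj
  calc 2 * #s = #(s ∪ s.map (addRightEmbedding 1)) := by
        rw [Finset.card_union_of_disjoint hdisj, Finset.card_map, two_mul]
    _ ≤ n + 2 := by simpa using Finset.card_le_univ (s ∪ s.map (addRightEmbedding 1))

lemma card_filter_eq_of_cycleGraph_coloring_avoiding {k : ℕ} (hk : 0 < k)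
    (f : Fin (2 * k) → Fin 3) (hf : ∀ ⦃p q⦄, (cycleGraph (2 * k)).Adj p q → f p ≠ f q)
    {i : Fin 3} (hi : ∀ p, f p ≠ i) (j : Fin 3) : #{p | f p = j} = if j = i then 0 else k := by
  have hle (j : Fin 3) : #{p | f p = j} ≤ k := by
    have := two_mul_card_le_of_isIndepSet_cycleGraph (by omega) (s := {p | f p = j})
      fun p hp q hq _ hpq => hf hpq (by simp_all)
    omega
  have hsum : ∑ j, #{p | f p = j} = 2 * k := by
    rw [← Finset.card_eq_sum_card_fiberwise (fun p _ => Finset.mem_univ (f p)), Finset.card_univ,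
      Fintype.card_fin]
  have hi0 : #{p | f p = i} = 0 := by simp [hi]
  rw [Fin.sum_univ_three] at hsum
  have h0 := hle 0
  have h1 := hle 1
  have h2 := hle 2
  fin_cases i <;> fin_cases j <;>
    simp only [Fin.zero_eta, Fin.mk_one, Fin.reduceFinMk, Fin.isValue, reduceIte, Fin.reduceEq]
      at hi0 ⊢ <;> omega

end SimpleGraph

lemma Fin.card_filter_mod_two_and_div_two {k r : ℕ} (hr : r < 2) (Q : ℕ → Prop)
    [DecidablePred Q] :
    #{p : Fin (2 * k) | p.val % 2 = r ∧ Q (p.val / 2)} = #{q : Fin k | Q q.val} := by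
  refine Finset.card_nbij' (fun p : Fin (2 * k) => (⟨p.val / 2, by omega⟩ : Fin k))
    (fun q : Fin k => (⟨2 * q.val + r, by have := q.isLt; omega⟩ : Fin (2 * k))) ?_ ?_ ?_ ?_ <;>
    intro p hp <;> simp_all [Fin.ext_iff]
  · rwa [show (2 * p.val + r) / 2 = p.val by omega]
  all_goals omega

def cycleColor {k : ℕ} (i : Fin 4) (x : ℕ) (p : Fin (2 * k)) : Fin 4 :=
  if p.val % 2 = 1 then i + 2 else if p.val / 2 < x then i + 3 else i + 1

def coronaCycleColoring {V : Type*} (k : ℕ) (c : V → Fin 4) (x : V → ℕ) :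
    V ⊕ V × Fin (2 * k) → Fin 4 :=
  Sum.elim c fun vp => cycleColor (c vp.1) (x vp.1) vp.2

lemma cycleColor_ne (i : Fin 4) (x : ℕ) {k : ℕ} (p : Fin (2 * k)) : cycleColor i x p ≠ i := by
  unfold cycleColor
  split_ifs <;> omega

lemma cycleColor_ne_of_mod_two_ne (i : Fin 4) (x : ℕ) {k : ℕ} {p q : Fin (2 * k)}
    (h : p.val % 2 ≠ q.val % 2) : cycleColor i x p ≠ cycleColor i x q := by
  unfold cycleColor
  split_ifs <;> omega

lemma card_cycleColor_eq {k x : ℕ} (hx : x ≤ k) (i j : Fin 4) :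
    #{p : Fin (2 * k) | cycleColor i x p = j} =
      (if i = j + 2 then k else 0) + (if i = j + 1 then x else 0) +
        (if i = j + 3 then k - x else 0) := by
  have hodd := Fin.card_filter_mod_two_and_div_two (k := k) (r := 1) (by omega) (fun _ => True)
  have hlt := Fin.card_filter_mod_two_and_div_two (k := k) (r := 0) (by omega) (· < x)
  have hge := Fin.card_filter_mod_two_and_div_two (k := k) (r := 0) (by omega) (¬ · < x)
  have hsplit := Finset.card_filter_add_card_filter_not (s := (Finset.univ : Finset (Fin k)))
    (fun q => q.val < x)
  rw [Finset.filter_true, Finset.card_univ, Fintype.card_fin] at hodd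
  rw [Fin.card_filter_val_lt] at hlt hsplit
  rw [Finset.card_univ, Fintype.card_fin] at hsplit
  obtain rfl | rfl | rfl | rfl : j = i + 2 ∨ j = i + 3 ∨ j = i + 1 ∨ j = i := by omega
  · rw [Finset.filter_congr (q := fun p : Fin (2 * k) => p.val % 2 = 1 ∧ True)
      fun p _ => by rw [and_true]; unfold cycleColor; split_ifs <;> omega]
    split_ifs <;> omega
  · rw [Finset.filter_congr (q := fun p : Fin (2 * k) => p.val % 2 = 0 ∧ p.val / 2 < x)
      fun p _ => by unfold cycleColor; split_ifs <;> omega]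
    split_ifs <;> omega
  · rw [Finset.filter_congr (q := fun p : Fin (2 * k) => p.val % 2 = 0 ∧ ¬ p.val / 2 < x)
      fun p _ => by unfold cycleColor; split_ifs <;> omega]
    split_ifs <;> omega
  · simp only [cycleColor_ne, Finset.filter_false, Finset.card_empty]
    split_ifs <;> omega

lemma Finset.exists_le_sum_eq_of_le_mul_card {ι : Type*} (s : Finset ι) {k X : ℕ}
    (h : X ≤ k * #s) : ∃ x : ι → ℕ, (∀ i, x i ≤ k) ∧ ∑ i ∈ s, x i = X := by
  classical
  induction s using Finset.induction_on generalizing X with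
  | empty => exact ⟨0, fun _ => Nat.zero_le k, by simp_all⟩
  | insert a s ha ih =>
    rw [Finset.card_insert_of_notMem ha, mul_add_one] at h
    obtain ⟨x, hxk, hx⟩ := ih (X := X - min X k) (by omega)
    refine ⟨Function.update x a (min X k), fun i => ?_, ?_⟩
    · rcases eq_or_ne i a with rfl | hi
      · simp
      · simpa [hi] using hxk i
    · rw [Finset.sum_insert ha, Function.update_self,
        Finset.sum_congr rfl fun i hi => Function.update_of_ne (ne_of_mem_of_not_mem hi ha) _ _, hx]
      omega

/-- The size of colour class `j` of `coronaCycleColoring` when `a i` vertices of `H` have colour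
`i` and, over these, `X i` even cycle positions get colour `i + 3`. -/
def coronaColorCount (k : ℕ) (a X : Fin 4 → ℕ) (j : Fin 4) : ℕ :=
  a j + k * a (j + 2) + X (j + 1) + (k * a (j + 3) - X (j + 3))

/- Classes `j` and `j + 2` have a total (`P`, resp. `Q`) independent of `X`; the witness gives
classes `0` and `1` exactly half of it, rounded down, which `|a i - a j| ≤ 1` makes feasible. -/
lemma exists_balanced_coronaColorCount {k : ℕ} (hk : 0 < k) (a : Fin 4 → ℕ)
    (ha : ∀ i j, a i ≤ a j + 1) (hS : 2 ≤ ∑ i, a i) :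
    ∃ X : Fin 4 → ℕ, (∀ i, X i ≤ k * a i) ∧
      ∀ i j, coronaColorCount k a X i ≤ coronaColorCount k a X j + 1 := by
  obtain ⟨i₀, hi₀⟩ := Finite.exists_min a
  have hA (i : Fin 4) : (a i = a i₀ ∧ k * a i = k * a i₀) ∨
      (a i = a i₀ + 1 ∧ k * a i = k * a i₀ + k) := by
    rcases (show a i = a i₀ ∨ a i = a i₀ + 1 by have := hi₀ i; have := ha i i₀; omega) with h | h <;>
      simp [h, mul_add]
  have hkm : (a i₀ = 0 ∧ k * a i₀ = 0) ∨ (1 ≤ a i₀ ∧ k ≤ k * a i₀) := by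
    rcases Nat.eq_zero_or_pos (a i₀) with h | h
    · simp [h]
    · exact Or.inr ⟨h, Nat.le_mul_of_pos_right k h⟩
  rw [Fin.sum_univ_four] at hS
  have h0 := hA 0
  have h1 := hA 1
  have h2 := hA 2
  have h3 := hA 3
  set K := k * a 0 + k * a 1 + k * a 2 + k * a 3
  set P := a 0 + a 2 + K
  set Q := a 1 + a 3 + K
  set T := P / 2 - (a 0 + k * a 2)
  set U := Q / 2 - (a 1 + k * a 3)
  set X : Fin 4 → ℕ := ![k * a 0 - (U - min U (k * a 2)), min T (k * a 1), min U (k * a 2),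
    k * a 3 - (T - min T (k * a 1))] with hX
  obtain ⟨hb0, hb1, hb2, hb3⟩ : coronaColorCount k a X 0 = P / 2 ∧ coronaColorCount k a X 1 = Q / 2 ∧
      coronaColorCount k a X 2 = P - P / 2 ∧ coronaColorCount k a X 3 = Q - Q / 2 := by
    refine ⟨?_, ?_, ?_, ?_⟩ <;>
      simp only [coronaColorCount, hX, Fin.isValue, Fin.reduceAdd, zero_add, Matrix.cons_val,
        Matrix.cons_val_one, Matrix.cons_val_zero] <;>
      omega
  refine ⟨X, fun i => ?_, fun i j => ?_⟩
  · fin_cases i <;> simp [hX]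
  · clear_value X
    fin_cases i <;> fin_cases j <;>
      simp only [Fin.zero_eta, Fin.mk_one, Fin.reduceFinMk, hb0, hb1, hb2, hb3] <;> omega

namespace SimpleGraph

lemma card_filter_corona_eq {V W γ : Type*} [Fintype V] [Fintype W] [DecidableEq γ]
    (c : V ⊕ V × W → γ) (j : γ) :
    #{z | c z = j} = #{v | c (.inl v) = j} + ∑ v, #{w | c (.inr (v, w)) = j} := by
  simp only [Finset.card_filter, Fintype.sum_sum_type, Fintype.sum_prod_type]

lemma EquitablyColorable.colorable {V : Type*} [Fintype V] {G : SimpleGraph V} {m : ℕ}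
    (h : G.EquitablyColorable m) : G.Colorable m :=
  let ⟨c, hc, _⟩ := h
  ⟨Coloring.mk c fun huv => hc huv⟩

lemma corona_not_colorable_two {V W : Type*} (H : SimpleGraph V) {C : SimpleGraph W} (v : V)
    {p q : W} (hpq : C.Adj p q) : ¬ (H.corona C).Colorable 2 := by
  rintro ⟨f⟩
  have h₁ := f.valid (show (H.corona C).Adj (.inl v) (.inr (v, p)) from rfl)
  have h₂ := f.valid (show (H.corona C).Adj (.inl v) (.inr (v, q)) from rfl)
  have h₃ := f.valid (show (H.corona C).Adj (.inr (v, p)) (.inr (v, q)) from ⟨rfl, hpq⟩)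
  omega

section Corona

variable {V : Type*} [Fintype V] {H : SimpleGraph V} {k : ℕ}

lemma EquitablyColorable.of_corona_cycleGraph_three (hk : 3 ≤ k)
    (h : (H.corona (cycleGraph (2 * k))).EquitablyColorable 3) :
    H.EquitablyColorable 3 ∧ 3 ∣ Fintype.card V := by
  obtain ⟨c, hc, hbal⟩ := h
  set a : Fin 3 → ℕ := fun j => #{v | c (.inl v) = j}
  have hclass (j : Fin 3) : #{z | c z = j} = a j + (Fintype.card V - a j) * k := by
    have hcycle (v : V) : #{p | c (.inr (v, p)) = j} = if c (.inl v) = j then 0 else k := by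
      rw [card_filter_eq_of_cycleGraph_coloring_avoiding (by omega) _
        (fun p q hpq => hc (show (H.corona _).Adj (.inr (v, p)) (.inr (v, q)) from ⟨rfl, hpq⟩))
        (fun p hp => hc (show (H.corona _).Adj (.inl v) (.inr (v, p)) from rfl) hp.symm)]
      simp only [eq_comm]
    have hcompl : a j + #{v | ¬c (.inl v) = j} = Fintype.card V :=
      Finset.card_filter_add_card_filter_not _
    rw [card_filter_corona_eq, Finset.sum_congr rfl fun v _ => hcycle v, Finset.sum_ite,
      Finset.sum_const_zero, Finset.sum_const, smul_eq_mul, zero_add,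
      show #{v | ¬c (.inl v) = j} = Fintype.card V - a j by omega]
  have heq (i j : Fin 3) : a i = a j := by
    have hi := hbal i j
    have hj := hbal j i
    rw [hclass, hclass] at hi hj
    have hai : a i ≤ Fintype.card V := Finset.card_filter_le _ _
    have haj : a j ≤ Fintype.card V := Finset.card_filter_le _ _
    zify [hai, haj] at hi hj
    have hk' : (3 : ℤ) ≤ k := by exact_mod_cast hk
    apply le_antisymm <;> by_contra! h <;> nlinarith
  have hcard : Fintype.card V = ∑ j, a j :=
    Finset.card_eq_sum_card_fiberwise fun v _ => Finset.mem_univ (c (.inl v))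
  refine ⟨⟨fun v => c (.inl v), fun u v huv => hc huv, fun i j => Nat.le_succ_of_le (heq i j).le⟩,
    a 0, ?_⟩
  rw [hcard, Fin.sum_univ_three, heq 1 0, heq 2 0]
  ring

lemma EquitablyColorable.corona_cycleGraph_four (hk : 0 < k) (hV : 2 ≤ Fintype.card V)
    (hH : H.EquitablyColorable 4) : (H.corona (cycleGraph (2 * k))).EquitablyColorable 4 := by
  obtain ⟨c, hc, hbal⟩ := hH
  set a : Fin 4 → ℕ := fun i => #{v | c v = i}
  have hcard : Fintype.card V = ∑ i, a i :=
    Finset.card_eq_sum_card_fiberwise fun v _ => Finset.mem_univ (c v)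
  obtain ⟨X, hXa, hXbal⟩ := exists_balanced_coronaColorCount hk a hbal (hcard ▸ hV)
  have hsplit (i : Fin 4) : ∃ y : V → ℕ, (∀ v, y v ≤ k) ∧ ∑ v ∈ {v | c v = i}, y v = X i :=
    Finset.exists_le_sum_eq_of_le_mul_card _ (hXa i)
  choose y hyk hy using hsplit
  set x : V → ℕ := fun v => y (c v) v
  have hX (i : Fin 4) : ∑ v ∈ {v | c v = i}, x v = X i := by
    rw [← hy i]
    exact Finset.sum_congr rfl fun v hv => by simp only [x, (Finset.mem_filter.mp hv).2]
  have hxk (v : V) : x v ≤ k := hyk _ v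
  refine ⟨coronaCycleColoring k c x, ?_, fun i j => ?_⟩
  · rintro (u | ⟨u, p⟩) (v | ⟨v, q⟩) huv
    · exact hc huv
    · obtain rfl : u = v := huv
      exact (cycleColor_ne _ _ q).symm
    · obtain rfl : u = v := huv
      exact cycleColor_ne _ _ p
    · obtain ⟨rfl, hpq⟩ := huv
      exact cycleColor_ne_of_mod_two_ne _ _ (cycleGraph_adj_mod_two_ne hpq)
  have hclass (j : Fin 4) : #{z | coronaCycleColoring k c x z = j} = coronaColorCount k a X j := by
    rw [card_filter_corona_eq]
    change #{v | c v = j} + ∑ v, #{p | cycleColor (c v) (x v) p = j} = _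
    rw [Finset.sum_congr rfl fun v _ => card_cycleColor_eq (hxk v) (c v) j,
      Finset.sum_add_distrib, Finset.sum_add_distrib, ← Finset.sum_filter, ← Finset.sum_filter,
      ← Finset.sum_filter, Finset.sum_const, smul_eq_mul, hX,
      Finset.sum_tsub_distrib _ fun v _ => hxk v, Finset.sum_const, smul_eq_mul, hX]
    simp only [coronaColorCount, a, mul_comm k, add_assoc]
  rw [hclass, hclass]
  exact hXbal i j

end Corona

end SimpleGraph

lemma coronaBase_injective {α : Type u} (β : Type u) :
    ∀ l, Function.Injective (coronaBase (α := α) β l)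
  | 0 => Function.injective_id
  | l + 1 => Sum.inl_injective.comp (coronaBase_injective β l)

section CycleCoronaPow

variable {α : Type} [Fintype α] {G : SimpleGraph α} {k : ℕ}

lemma equitablyColorable_four_coronaPow_cycleGraph (hk : 0 < k) (hα : 2 ≤ Fintype.card α)
    (hG : G.EquitablyColorable 4) :
    ∀ l, (coronaPow G (cycleGraph (2 * k)) l).EquitablyColorable 4
  | 0 => hG
  | l + 1 => (equitablyColorable_four_coronaPow_cycleGraph hk hα hG l).corona_cycleGraph_four hk
      (hα.trans (Fintype.card_le_of_injective _ (coronaBase_injective _ l)))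

lemma three_dvd_card_of_equitablyColorable_three_coronaPow_cycleGraph (hk : 3 ≤ k) :
    ∀ l, (coronaPow G (cycleGraph (2 * k)) (l + 1)).EquitablyColorable 3 → 3 ∣ Fintype.card α
  | 0, h => (h.of_corona_cycleGraph_three hk).2
  | l + 1, h =>
    three_dvd_card_of_equitablyColorable_three_coronaPow_cycleGraph hk l
      (h.of_corona_cycleGraph_three hk).1

end CycleCoronaPow

/-- If `G` is equitably 4-colorable on `n ≥ 2` vertices, `3 ∤ n`,
`k ≥ 3` and `l ≥ 1`, then `χ₌(G ∘^l C_{2k}) = 4`. -/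
theorem equitableChromaticNumber_coronaPow_evenCycle_eq_four
    {α : Type} [Fintype α] (G : SimpleGraph α) (n k l : ℕ)
    (hn : Fintype.card α = n) (hn2 : 2 ≤ n) (hG : G.EquitablyColorable 4)
    (hndvd : ¬ 3 ∣ n) (hk : 3 ≤ k) (hl : 1 ≤ l) :
    (coronaPow G (cycleGraph (2 * k)) l).equitableChromaticNumber = 4 := by
  obtain ⟨l, rfl⟩ : ∃ l', l = l' + 1 := ⟨l - 1, by omega⟩
  obtain ⟨v⟩ : Nonempty α := Fintype.card_pos_iff.mp (show 0 < Fintype.card α by omega)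
  have h4 := equitablyColorable_four_coronaPow_cycleGraph (k := k) (by omega) (by omega) hG (l + 1)
  refine le_antisymm (Nat.sInf_le h4) (le_csInf ⟨4, h4⟩ fun m hm => ?_)
  by_contra! hm4
  obtain hm2 | rfl : m ≤ 2 ∨ m = 3 := by omega
  · have h01 : (cycleGraph (2 * k)).Adj ⟨0, by omega⟩ ⟨1, by omega⟩ := by
      simp [cycleGraph_adj', Fin.sub_val_of_le]
    exact corona_not_colorable_two _ (coronaBase _ l v) h01 (hm.colorable.mono hm2)
  · exact hndvd (hn ▸ three_dvd_card_of_equitablyColorable_three_coronaPow_cycleGraph hk l hm)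
end

section
/- For every integer m ≥ 3, the equitable chromatic number of the corona of the single-vertex graph K_1 with the cycle C_m satisfies: χ_=(K_1 ∘ C_m) = 4 if m = 3, and χ_=(K_1 ∘ C_m) = ⌈m/2⌉ + 1 if m > 3. -/
open SimpleGraph Finset

universe u

/-!
The hub of the wheel is adjacent to every other vertex, so in an equitable `k`-colouring its
colour class is a singleton and hence every class has at most two vertices: `m + 1 ≤ 2k - 1`.
For `m ≥ 4` this is attained with `h = ⌈m/2⌉ = (m + 1) / 2` rim colours plus one for the hub:
rim vertex `i` gets colour `i % h`. Rim neighbours `i, i + 1 < m` get distinct colours as `h ≥ 2`,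
and the wrap-around pair `m - 1, 0` does because `h < m - 1 < 2h`; each colour `j < h` is used by
`j` and possibly `j + h`. For `m = 3` the wheel is `K_4`.
-/

namespace SimpleGraph

section Equitable

variable {V : Type*} [Fintype V] {G : SimpleGraph V}

theorem equitableChromaticNumber_eq {n : ℕ} (hn : G.EquitablyColorable n)
    (hmin : ∀ k, G.EquitablyColorable k → n ≤ k) : G.equitableChromaticNumber = n :=
  IsLeast.csInf_eq ⟨hn, hmin⟩

theorem EquitablyColorable.colorable_s13 {k : ℕ} (h : G.EquitablyColorable k) : G.Colorable k :=
  let ⟨c, hc, _⟩ := h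
  ⟨Coloring.mk c fun hadj => hc hadj⟩

theorem equitablyColorable_card : G.EquitablyColorable (Fintype.card V) := by
  refine ⟨Fintype.equivFin V, fun u v huv h => G.ne_of_adj huv ((Fintype.equivFin V).injective h),
    fun i j => ?_⟩
  have hclass (i) : (univ.filter fun v => Fintype.equivFin V v = i).card = 1 :=
    card_eq_one.mpr ⟨(Fintype.equivFin V).symm i, by ext; simp [Equiv.eq_symm_apply]⟩
  rw [hclass, hclass]
  omega

theorem equitableChromaticNumber_top :
    (⊤ : SimpleGraph V).equitableChromaticNumber = Fintype.card V := by
  refine equitableChromaticNumber_eq equitablyColorable_card fun k hk => ?_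
  have hclique : (⊤ : SimpleGraph V).IsClique (univ : Finset V) := by
    rw [coe_univ]; exact isClique_univ.mpr rfl
  simpa using hclique.card_le_of_colorable hk.colorable_s13

theorem IsEquitableColoring.card_add_one_le {k : ℕ} {c : V → Fin k}
    (hc : G.IsEquitableColoring c) (i : Fin k) :
    Fintype.card V + 1 ≤ k * ((univ.filter fun v => c v = i).card + 1) := by
  set s := fun j => (univ.filter fun v => c v = j).card
  have hsum : Fintype.card V = ∑ j, s j := card_eq_sum_card_fiberwise fun v _ => mem_univ (c v)
  have hrest : ∑ j ∈ univ.erase i, s j ≤ (k - 1) * (s i + 1) := by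
    simpa using sum_le_card_nsmul (univ.erase i) s (s i + 1) fun j _ => hc.2 j i
  rw [← add_sum_erase univ s (mem_univ i)] at hsum
  obtain ⟨k, rfl⟩ := Nat.exists_eq_add_of_lt i.pos
  simp only [zero_add, add_tsub_cancel_right] at hrest ⊢
  nlinarith

theorem IsEquitableColoring.card_add_one_le_two_mul {k : ℕ} {c : V → Fin k}
    (hc : G.IsEquitableColoring c) {v : V} (hv : ∀ w, w ≠ v → G.Adj v w) :
    Fintype.card V + 1 ≤ 2 * k := by
  have hsingle : (univ.filter fun w => c w = c v).card ≤ 1 := by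
    have hmem (w) (hw : w ∈ univ.filter fun w => c w = c v) : w = v := by
      by_contra hne
      exact hc.1 (hv w hne) (mem_filter.1 hw).2.symm
    exact card_le_one.mpr fun a ha b hb => (hmem a ha).trans (hmem b hb).symm
  calc Fintype.card V + 1 ≤ k * ((univ.filter fun w => c w = c v).card + 1) :=
        hc.card_add_one_le (c v)
    _ ≤ k * 2 := by gcongr; omega
    _ = 2 * k := mul_comm _ _

end Equitable

section Corona

variable {α β : Type*}

theorem corona_eq_top_of_subsingleton [Subsingleton α] (G : SimpleGraph α) :
    G.corona (⊤ : SimpleGraph β) = ⊤ := by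
  ext (u | ⟨u, a⟩) (v | ⟨v, b⟩) <;> simp [corona, Subsingleton.elim u v]

theorem corona_adj_inl_of_subsingleton [Subsingleton α] (G : SimpleGraph α) (H : SimpleGraph β)
    (u : α) (w : α ⊕ α × β) (hw : w ≠ Sum.inl u) : (G.corona H).Adj (Sum.inl u) w := by
  obtain v | ⟨v, b⟩ := w
  · exact absurd (congrArg Sum.inl (Subsingleton.elim v u)) hw
  · exact Subsingleton.elim u v

theorem corona_equitablyColorable [Fintype β] {H : SimpleGraph β} {h : ℕ} (d : β → Fin h)
    (hd : ∀ ⦃a b⦄, H.Adj a b → d a ≠ d b)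
    (hcard : ∀ j, (univ.filter fun b => d b = j).card ∈ Set.Icc 1 2) :
    ((⊥ : SimpleGraph (Fin 1)).corona H).EquitablyColorable (h + 1) := by
  set c : Fin 1 ⊕ Fin 1 × β → Fin (h + 1) :=
    Sum.elim (fun _ => Fin.last h) fun p => (d p.2).castSucc
  have hclass : ∀ j, (univ.filter fun x => c x = j).card ∈ Set.Icc 1 2 := by
    refine Fin.lastCases ?_ fun j => ?_
    · have hhub : (univ.filter fun x => c x = Fin.last h).card = 1 := by
        rw [card_filter, Fintype.sum_sum_type, Fintype.sum_prod_type]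
        simp [c]
      simp [hhub]
    · have hrim : (univ.filter fun x => c x = j.castSucc).card =
          (univ.filter fun b => d b = j).card := by
        rw [card_filter, card_filter, Fintype.sum_sum_type, Fintype.sum_prod_type]
        simp [c, (Fin.castSucc_ne_last j).symm]
      exact hrim ▸ hcard j
  refine ⟨c, ?_, fun i j => by
    obtain ⟨-, hi⟩ := hclass i; obtain ⟨hj, -⟩ := hclass j; omega⟩
  rintro (u | ⟨u, a⟩) (v | ⟨v, b⟩) hadj
  · exact hadj.elim
  · exact (Fin.castSucc_ne_last _).symm
  · exact Fin.castSucc_ne_last _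
  · exact fun heq => hd hadj.2 (Fin.castSucc_injective _ heq)

end Corona

theorem cycleGraph_adj_mod_ne {m h : ℕ} (hh : 2 ≤ h) (hwrap : (m - 1) % h ≠ 0) {u v : Fin m}
    (huv : (cycleGraph m).Adj u v) : u.val % h ≠ v.val % h := by
  obtain ⟨n, rfl⟩ : ∃ n, m = n + 2 := by
    refine Nat.exists_eq_add_of_le' (not_lt.1 fun hm => ?_)
    interval_cases m
    · exact u.elim0
    · exact cycleGraph_one_adj huv
  have hsucc (x : Fin (n + 2)) : (x + 1).val % h ≠ x.val % h := by
    rw [Fin.val_add_one]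
    split_ifs with hx
    · simpa [hx, eq_comm] using hwrap
    · intro heq
      have h1 : 1 ≡ 0 [MOD h] := Nat.ModEq.add_left_cancel' x (by rwa [add_zero])
      have := Nat.le_of_dvd one_pos (Nat.modEq_zero_iff_dvd.1 h1)
      omega
  rw [cycleGraph_adj, sub_eq_iff_eq_add', sub_eq_iff_eq_add'] at huv
  rcases huv with rfl | rfl
  · exact hsucc v
  · exact (hsucc u).symm

theorem card_filter_mod_eq_mem_Icc {m h j : ℕ} (hj : j < h) (hhm : h ≤ m) (hmh : m ≤ 2 * h) :
    (univ.filter fun i : Fin m => i.val % h = j).card ∈ Set.Icc 1 2 := by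
  refine ⟨card_pos.2 ⟨⟨j, by omega⟩, by simp [Nat.mod_eq_of_lt hj]⟩, ?_⟩
  have hquot : Set.MapsTo (fun i : Fin m => i.val / h)
      (univ.filter fun i : Fin m => i.val % h = j) (range 2) :=
    fun i _ => mem_range.2 ((Nat.div_lt_iff_lt_mul (by omega)).2 (by omega))
  have hinj : Set.InjOn (fun i : Fin m => i.val / h)
      (univ.filter fun i : Fin m => i.val % h = j) := by
    intro a ha b hb hab
    rw [mem_coe, mem_filter] at ha hb
    ext
    rw [← Nat.div_add_mod a.val h, ← Nat.div_add_mod b.val h, ha.2, hb.2]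
    exact congrArg (h * · + j) hab
  simpa using card_le_card_of_injOn _ hquot hinj

theorem wheel_equitablyColorable {m : ℕ} (hm : 4 ≤ m) :
    ((⊥ : SimpleGraph (Fin 1)).corona (cycleGraph m)).EquitablyColorable ((m + 1) / 2 + 1) := by
  set h := (m + 1) / 2
  have hpos : 0 < h := by omega
  refine corona_equitablyColorable (fun i => ⟨i.val % h, Nat.mod_lt _ hpos⟩)
    (fun u v huv heq => cycleGraph_adj_mod_ne (by omega) ?_ huv (congrArg Fin.val heq))
    fun j => by simpa [Fin.ext_iff] using card_filter_mod_eq_mem_Icc j.isLt (by omega) (by omega)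
  rw [Nat.mod_eq_sub_mod (by omega), Nat.mod_eq_of_lt (by omega)]
  omega

end SimpleGraph

theorem equitableChromaticNumber_wheel_general (m : ℕ) :
    (m = 3 →
      ((⊥ : SimpleGraph (Fin 1)).corona (cycleGraph m)).equitableChromaticNumber = 4) ∧
    (3 < m →
      ((⊥ : SimpleGraph (Fin 1)).corona (cycleGraph m)).equitableChromaticNumber =
        (m + 1) / 2 + 1) := by
  refine ⟨?_, fun hm =>
    equitableChromaticNumber_eq (wheel_equitablyColorable hm) fun k hk => ?_⟩
  · rintro rfl
    rw [cycleGraph_three_eq_top, corona_eq_top_of_subsingleton, equitableChromaticNumber_top]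
    simp
  · obtain ⟨c, hc⟩ := hk
    have hbound := hc.card_add_one_le_two_mul (corona_adj_inl_of_subsingleton _ _ 0)
    simp only [Fintype.card_sum, Fintype.card_prod, Fintype.card_fin, one_mul] at hbound
    omega

/-- `χ₌(K_1 ∘ C_m) = 4` if `m = 3` and `χ₌(K_1 ∘ C_m) = ⌈m/2⌉ + 1`
if `m > 3`. -/
theorem equitableChromaticNumber_wheel (m : ℕ) (hm : 3 ≤ m) :
    (m = 3 →
      ((⊥ : SimpleGraph (Fin 1)).corona (cycleGraph m)).equitableChromaticNumber = 4) ∧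
    (3 < m →
      ((⊥ : SimpleGraph (Fin 1)).corona (cycleGraph m)).equitableChromaticNumber =
        (m + 1) / 2 + 1) :=
  equitableChromaticNumber_wheel_general m
end
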